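/- arXiv:1311.3587 — 3 statements merged into one kernel-verified Lean document; each statement's English description precedes it below -/
import Mathlib

section
/- For all real numbers a, b and all real p ≥ 2, one has |a + b|^p ≥ |a|^p + |b|^p - p·|a|^(p-1)·|b| - p·|a|·|b|^(p-1). -/
/-!
Assume `|b| ≤ |a|` and put `x = |a|`, `y = |b|`. Then `|a + b| ≥ x - y ≥ 0`, and by convexity of
`t ↦ t ^ p` (Bernoulli's inequality) `(x - y) ^ p ≥ x ^ p - p x ^ (p - 1) y`. The remaining term
is harmless because `y ^ p = y · y ^ (p - 1) ≤ p x y ^ (p - 1)`.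
-/

namespace Real

variable {x y p : ℝ}

theorem rpow_sub_mul_rpow_sub_one_mul_le_rpow_sub (hy : 0 ≤ y) (hyx : y ≤ x) (hp : 1 ≤ p) :
    x ^ p - p * x ^ (p - 1) * y ≤ (x - y) ^ p := by
  obtain rfl | hx := (hy.trans hyx).eq_or_lt
  · obtain rfl : y = 0 := le_antisymm hyx hy
    simp
  have bernoulli : 1 + p * (-y / x) ≤ (1 + -y / x) ^ p :=
    one_add_mul_self_le_rpow_one_add (by rw [neg_div, neg_le_neg_iff, div_le_one hx]; exact hyx) hp
  have hxp : x ^ (p - 1) = x ^ p / x := by rw [rpow_sub hx, rpow_one]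
  calc x ^ p - p * x ^ (p - 1) * y = (1 + p * (-y / x)) * x ^ p := by
        rw [hxp]; field_simp; ring
    _ ≤ (1 + -y / x) ^ p * x ^ p := by gcongr
    _ = (x - y) ^ p := by
        rw [← mul_rpow (by rw [neg_div, ← sub_eq_add_neg, sub_nonneg, div_le_one hx]; exact hyx)
          hx.le]
        congr 1
        field_simp
        ring

theorem rpow_le_mul_mul_rpow_sub_one (hy : 0 ≤ y) (hyx : y ≤ x) (hp : 1 ≤ p) :
    y ^ p ≤ p * x * y ^ (p - 1) := by
  have hyp : y ^ p = y * y ^ (p - 1) := by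
    rw [← rpow_one_add' hy (by linarith)]; ring_nf
  have hpow : 0 ≤ y ^ (p - 1) := rpow_nonneg hy _
  calc y ^ p = y * y ^ (p - 1) := hyp
    _ ≤ 1 * x * y ^ (p - 1) := by rw [one_mul]; gcongr
    _ ≤ p * x * y ^ (p - 1) := by gcongr; exact hy.trans hyx

theorem rpow_add_rpow_sub_le_rpow_sub (hy : 0 ≤ y) (hyx : y ≤ x) (hp : 1 ≤ p) :
    x ^ p + y ^ p - p * x ^ (p - 1) * y - p * x * y ^ (p - 1) ≤ (x - y) ^ p := by
  linarith [rpow_sub_mul_rpow_sub_one_mul_le_rpow_sub hy hyx hp,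
    rpow_le_mul_mul_rpow_sub_one hy hyx hp]

end Real

theorem abs_rpow_add_rpow_sub_le_abs_add_rpow {a b p : ℝ} (hba : |b| ≤ |a|) (hp : 1 ≤ p) :
    |a| ^ p + |b| ^ p - p * |a| ^ (p - 1) * |b| - p * |a| * |b| ^ (p - 1) ≤ |a + b| ^ p :=
  (Real.rpow_add_rpow_sub_le_rpow_sub (abs_nonneg b) hba hp).trans <|
    Real.rpow_le_rpow (sub_nonneg.mpr hba) (abs_sub_abs_le_abs_add a b) (by linarith)

theorem stmt0 (a b p : ℝ) (hp : 2 ≤ p) :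
    |a + b| ^ p ≥ |a| ^ p + |b| ^ p - p * |a| ^ (p - 1) * |b| - p * |a| * |b| ^ (p - 1) := by
  have hp₁ : 1 ≤ p := by linarith
  rcases le_total |b| |a| with hba | hab
  · exact abs_rpow_add_rpow_sub_le_abs_add_rpow hba hp₁
  · have := abs_rpow_add_rpow_sub_le_abs_add_rpow hab hp₁
    rw [add_comm b a] at this
    linarith
end

section
/- Let V∞ > 0, q ≥ 2, 0 < b < 2·√V∞, C > 0, and suppose w : ℝ^N → ℝ satisfies 0 ≤ w(x) ≤ C·exp(-√V∞·|x|) for all x. Then there is a constant C' > 0 such that for all R > 0 and all unit vectors y ∈ ℝ^N, ∫_{ℝ^N} w(x + R·y)^(q-1)·w(x - R·y) dx ≤ C'·exp(-b·R). -/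
/-!
Since `‖x + v‖ + ‖x - v‖ ≥ 2 max(‖v‖, ‖x‖)`, splitting `√V∞ = b/2 + (√V∞ - b/2)` gives
`√V∞ (‖x + Ry‖ + ‖x - Ry‖) ≥ bR + (2√V∞ - b)‖x‖`. As `q - 1 ≥ 1`, the factor `w(x + Ry)^(q-1)`
still decays like `exp(-√V∞ ‖x + Ry‖)`, so the integrand is at most
`C^q exp(-bR) exp(-(2√V∞ - b)‖x‖)`, and the last factor is integrable because `b < 2√V∞`.
-/

open MeasureTheory Real

theorem integrable_exp_neg_mul_norm {E : Type*} [NormedAddCommGroup E] [NormedSpace ℝ E]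
    [FiniteDimensional ℝ E] [MeasurableSpace E] [BorelSpace E] (μ : Measure E)
    [μ.IsAddHaarMeasure] {ε : ℝ} (hε : 0 < ε) :
    Integrable (fun x => exp (-ε * ‖x‖)) μ := by
  rcases subsingleton_or_nontrivial E with _ | _
  · refine (integrable_const 1).mono' (by fun_prop) (.of_forall fun x => ?_)
    simpa [abs_of_pos (exp_pos _)] using mul_nonneg hε.le (norm_nonneg x)
  · rw [integrable_fun_norm_addHaar μ (f := fun r => exp (-ε * r))]
    refine (integrableOn_rpow_mul_exp_neg_mul_rpow (s := (Module.finrank ℝ E - 1 : ℕ))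
      (p := 1) (neg_one_lt_zero.trans_le (Nat.cast_nonneg _)) one_pos hε).congr_fun
      (fun r _ => ?_) measurableSet_Ioi
    simp [rpow_natCast]

theorem mul_norm_add_mul_norm_le_mul_norm_add_add_norm_sub {E : Type*}
    [SeminormedAddCommGroup E] [NormedSpace ℝ E] (x v : E) {s b : ℝ} (hb : 0 ≤ b)
    (hbs : b ≤ 2 * s) :
    b * ‖v‖ + (2 * s - b) * ‖x‖ ≤ s * (‖x + v‖ + ‖x - v‖) := by
  have hv : 2 * ‖v‖ ≤ ‖x + v‖ + ‖x - v‖ := by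
    have h : (x + v) - (x - v) = (2 : ℝ) • v := by module
    simpa [h, norm_smul] using norm_sub_le (x + v) (x - v)
  have hx : 2 * ‖x‖ ≤ ‖x + v‖ + ‖x - v‖ := by
    have h : (x + v) + (x - v) = (2 : ℝ) • x := by module
    simpa [h, norm_smul] using norm_add_le (x + v) (x - v)
  nlinarith [mul_le_mul_of_nonneg_left hv hb, mul_le_mul_of_nonneg_left hx (sub_nonneg.2 hbs)]

theorem rpow_le_rpow_mul_exp_neg {u C t p : ℝ} (hu : 0 ≤ u) (huC : u ≤ C * exp (-t))
    (ht : 0 ≤ t) (hp : 1 ≤ p) : u ^ p ≤ C ^ p * exp (-t) := by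
  have hC : 0 ≤ C := nonneg_of_mul_nonneg_left (hu.trans huC) (exp_pos _)
  calc u ^ p ≤ (C * exp (-t)) ^ p := rpow_le_rpow hu huC (by linarith)
    _ = C ^ p * exp (-t * p) := by rw [mul_rpow hC (exp_pos _).le, ← exp_mul]
    _ ≤ C ^ p * exp (-t) := by gcongr; nlinarith

theorem rpow_sub_one_mul_le_mul_exp_neg {E : Type*} [SeminormedAddCommGroup E] [NormedSpace ℝ E]
    {w : E → ℝ} {C s q b : ℝ} (hq : 2 ≤ q) (hb : 0 ≤ b) (hbs : b ≤ 2 * s)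
    (hw : ∀ x, 0 ≤ w x ∧ w x ≤ C * exp (-s * ‖x‖)) (x v : E) :
    w (x + v) ^ (q - 1) * w (x - v) ≤ C ^ q * exp (-b * ‖v‖) * exp (-(2 * s - b) * ‖x‖) := by
  obtain ⟨hw₁, hw₁C⟩ := hw (x + v)
  obtain ⟨hw₂, hw₂C⟩ := hw (x - v)
  have hC : 0 ≤ C := nonneg_of_mul_nonneg_left (hw₂.trans hw₂C) (exp_pos _)
  rw [neg_mul] at hw₁C hw₂C
  have hs : 0 ≤ s := by linarith
  have hpow := rpow_le_rpow_mul_exp_neg (p := q - 1) hw₁ hw₁C (by positivity) (by linarith)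
  calc w (x + v) ^ (q - 1) * w (x - v)
      ≤ C ^ (q - 1) * exp (-(s * ‖x + v‖)) * (C * exp (-(s * ‖x - v‖))) :=
        mul_le_mul hpow hw₂C hw₂ (by positivity)
    _ = C ^ q * exp (-(s * (‖x + v‖ + ‖x - v‖))) := by
        rw [show C ^ q = C ^ (q - 1) * C by rw [← rpow_add_one' hC (by linarith), sub_add_cancel],
          mul_add, neg_add, exp_add]
        ring
    _ ≤ C ^ q * exp (-b * ‖v‖) * exp (-(2 * s - b) * ‖x‖) := by
        rw [mul_assoc, ← exp_add]
        gcongr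
        linarith [mul_norm_add_mul_norm_le_mul_norm_add_add_norm_sub x v hb hbs]

theorem stmt5_general (N : ℕ) (Vinf q b C : ℝ) (hq : 2 ≤ q)
    (hb : 0 < b) (hb2 : b < 2 * Real.sqrt Vinf)
    (w : EuclideanSpace ℝ (Fin N) → ℝ)
    (hw : ∀ x, 0 ≤ w x ∧ w x ≤ C * Real.exp (-Real.sqrt Vinf * ‖x‖)) :
    ∃ C' > 0, ∀ R > 0, ∀ y : EuclideanSpace ℝ (Fin N), ‖y‖ = 1 →
      (∫ x, w (x + R • y) ^ (q - 1) * w (x - R • y)) ≤ C' * Real.exp (-b * R) := by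
  set ε := 2 * √Vinf - b
  have hC : 0 ≤ C := nonneg_of_mul_nonneg_left ((hw 0).1.trans (hw 0).2) (exp_pos _)
  refine ⟨C ^ q * (∫ x : EuclideanSpace ℝ (Fin N), exp (-ε * ‖x‖)) + 1, by positivity,
    fun R hR y hy => ?_⟩
  have hRy : ‖R • y‖ = R := by rw [norm_smul, hy, mul_one, norm_of_nonneg hR.le]
  calc (∫ x, w (x + R • y) ^ (q - 1) * w (x - R • y))
      ≤ ∫ x, C ^ q * exp (-b * R) * exp (-ε * ‖x‖) := by
        refine integral_mono_of_nonneg (.of_forall fun x => ?_)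
          ((integrable_exp_neg_mul_norm volume (by linarith)).const_mul _) (.of_forall fun x => ?_)
        · exact mul_nonneg (rpow_nonneg (hw _).1 _) (hw _).1
        · simpa only [hRy] using rpow_sub_one_mul_le_mul_exp_neg hq hb.le hb2.le hw x (R • y)
    _ = C ^ q * (∫ x, exp (-ε * ‖x‖)) * exp (-b * R) := by rw [integral_const_mul]; ring
    _ ≤ (C ^ q * (∫ x, exp (-ε * ‖x‖)) + 1) * exp (-b * R) := by gcongr; linarith

theorem stmt5 (N : ℕ) (hN : 1 ≤ N) (Vinf q b C : ℝ) (hV : 0 < Vinf) (hq : 2 ≤ q)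
    (hb : 0 < b) (hb2 : b < 2 * Real.sqrt Vinf) (hC : 0 < C)
    (w : EuclideanSpace ℝ (Fin N) → ℝ)
    (hw : ∀ x, 0 ≤ w x ∧ w x ≤ C * Real.exp (-Real.sqrt Vinf * ‖x‖)) :
    ∃ C' > 0, ∀ R > 0, ∀ y : EuclideanSpace ℝ (Fin N), ‖y‖ = 1 →
      (∫ x, w (x + R • y) ^ (q - 1) * w (x - R • y)) ≤ C' * Real.exp (-b * R) :=
  stmt5_general N Vinf q b C hq hb hb2 w hw
end

section
/- Suppose w : ℝ^N → ℝ is a nonnegative function in L^p with ∫ w^p = 1 (for some real p ≥ 2), and suppose for some b > 0 and all R > 0 and unit vectors y, ∫ w(x+Ry)^(p-1)·w(x-Ry) dx ≤ C'·e^{-bR}. Then the L^p norm of w(·+Ry) - w(·-Ry) satisfies ‖w(·+Ry) - w(·-Ry)‖_p^p ≥ 2 - 2p·C'·e^{-bR}. -/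
/-! Write `f = w(· + Ry)` and `g = w(· - Ry)`. The pointwise inequality
`|a - c|^p ≥ a^p + c^p - p a^(p-1) c - p c^(p-1) a` for `a, c ≥ 0` integrates to
`‖f - g‖_p^p ≥ ‖f‖_p^p + ‖g‖_p^p - p ∫ f^(p-1) g - p ∫ g^(p-1) f`. Translation invariance of
Lebesgue measure gives `‖f‖_p^p = ‖g‖_p^p = 1`, and the two cross integrals are the assumed
interaction bound in the directions `y` and `-y`. -/

open MeasureTheory Real

lemma Real.rpow_eq_mul_rpow_sub_one {x p : ℝ} (hx : 0 ≤ x) (hp : 1 ≤ p) :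
    x ^ p = x * x ^ (p - 1) := by
  rw [← rpow_one_add' hx (by linarith)]
  ring_nf

lemma Real.rpow_sub_one_mul_le_rpow_add_rpow {p a c : ℝ} (hp : 1 ≤ p) (ha : 0 ≤ a)
    (hc : 0 ≤ c) : a ^ (p - 1) * c ≤ a ^ p + c ^ p := by
  have hp1 : 0 ≤ p - 1 := by linarith
  rcases le_total a c with h | h
  · calc a ^ (p - 1) * c ≤ c ^ (p - 1) * c :=
          mul_le_mul_of_nonneg_right (rpow_le_rpow ha h hp1) hc
      _ = c ^ p := by rw [mul_comm, ← rpow_eq_mul_rpow_sub_one hc hp]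
      _ ≤ a ^ p + c ^ p := le_add_of_nonneg_left (rpow_nonneg ha p)
  · calc a ^ (p - 1) * c ≤ a ^ (p - 1) * a := mul_le_mul_of_nonneg_left h (rpow_nonneg ha _)
      _ = a ^ p := by rw [mul_comm, ← rpow_eq_mul_rpow_sub_one ha hp]
      _ ≤ a ^ p + c ^ p := le_add_of_nonneg_right (rpow_nonneg hc p)

lemma Real.abs_sub_rpow_le_rpow_add_rpow {p a c : ℝ} (hp : 0 ≤ p) (ha : 0 ≤ a) (hc : 0 ≤ c) :
    |a - c| ^ p ≤ a ^ p + c ^ p := by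
  rcases le_total a c with h | h
  · calc |a - c| ^ p ≤ c ^ p :=
          rpow_le_rpow (abs_nonneg _) (by rw [abs_sub_comm, abs_of_nonneg (by linarith)]; linarith) hp
      _ ≤ a ^ p + c ^ p := le_add_of_nonneg_left (rpow_nonneg ha p)
  · calc |a - c| ^ p ≤ a ^ p :=
          rpow_le_rpow (abs_nonneg _) (by rw [abs_of_nonneg (by linarith)]; linarith) hp
      _ ≤ a ^ p + c ^ p := le_add_of_nonneg_right (rpow_nonneg hc p)

/-- Bernoulli's inequality `(1 - c/a)^p ≥ 1 - p c/a`, multiplied by `a^p`. -/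
lemma Real.rpow_sub_mul_rpow_sub_one_le_sub_rpow {p a c : ℝ} (hp : 1 ≤ p) (hc : 0 ≤ c)
    (hca : c ≤ a) : a ^ p - p * (a ^ (p - 1) * c) ≤ (a - c) ^ p := by
  rcases (hc.trans hca).eq_or_lt with rfl | ha
  · obtain rfl : c = 0 := le_antisymm hca hc
    simp [zero_rpow (by linarith : p ≠ 0)]
  have hratio : c / a ≤ 1 := div_le_one_of_le₀ hca ha.le
  have hbern := one_add_mul_self_le_rpow_one_add (by linarith : -1 ≤ -(c / a)) hp
  calc a ^ p - p * (a ^ (p - 1) * c) = (1 + p * -(c / a)) * a ^ p := by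
        rw [rpow_sub ha p 1, rpow_one]
        field_simp
        ring
    _ ≤ (1 + -(c / a)) ^ p * a ^ p := mul_le_mul_of_nonneg_right hbern (rpow_nonneg ha.le p)
    _ = (a - c) ^ p := by
        rw [← mul_rpow (by linarith) ha.le]
        congr 1
        field_simp
        ring

lemma Real.rpow_add_rpow_sub_le_abs_sub_rpow {p a c : ℝ} (hp : 1 ≤ p) (ha : 0 ≤ a)
    (hc : 0 ≤ c) :
    a ^ p + c ^ p - p * (a ^ (p - 1) * c) - p * (c ^ (p - 1) * a) ≤ |a - c| ^ p := by
  wlog hca : c ≤ a generalizing a c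
  · have := this hc ha (le_of_not_ge hca)
    rw [abs_sub_comm]
    linarith
  have hsmall : c ^ p ≤ p * (c ^ (p - 1) * a) :=
    calc c ^ p = c ^ (p - 1) * c := by rw [mul_comm, ← rpow_eq_mul_rpow_sub_one hc hp]
      _ ≤ c ^ (p - 1) * a := mul_le_mul_of_nonneg_left hca (rpow_nonneg hc _)
      _ ≤ p * (c ^ (p - 1) * a) :=
          le_mul_of_one_le_left (mul_nonneg (rpow_nonneg hc _) (hc.trans hca)) hp
  rw [abs_of_nonneg (sub_nonneg.mpr hca)]
  linarith [rpow_sub_mul_rpow_sub_one_le_sub_rpow hp hc hca]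

section

variable {α : Type*} [MeasurableSpace α] {μ : Measure α} {p : ℝ} {f g : α → ℝ}

lemma aestronglyMeasurable_of_integrable_rpow (hp : 0 < p) (hf : ∀ x, 0 ≤ f x)
    (hfp : Integrable (fun x => f x ^ p) μ) : AEStronglyMeasurable f μ := by
  have hroot : f = fun x => (f x ^ p) ^ p⁻¹ := by
    funext x
    rw [← rpow_mul (hf x), mul_inv_cancel₀ hp.ne', rpow_one]
  rw [hroot]
  exact (continuous_rpow_const (inv_nonneg.mpr hp.le)).comp_aestronglyMeasurable hfp.1

variable (hp : 1 ≤ p) (hf : ∀ x, 0 ≤ f x) (hg : ∀ x, 0 ≤ g x)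
  (hfp : Integrable (fun x => f x ^ p) μ) (hgp : Integrable (fun x => g x ^ p) μ)
include hp hf hg hfp hgp

lemma integrable_rpow_sub_one_mul : Integrable (fun x => f x ^ (p - 1) * g x) μ := by
  have hcont : Continuous (fun t : ℝ => t ^ (p - 1)) := continuous_rpow_const (by linarith)
  refine (hfp.add hgp).mono' ((hcont.comp_aestronglyMeasurable
    (aestronglyMeasurable_of_integrable_rpow (by linarith) hf hfp)).mul
    (aestronglyMeasurable_of_integrable_rpow (by linarith) hg hgp)) (ae_of_all _ fun x => ?_)
  rw [norm_of_nonneg (mul_nonneg (rpow_nonneg (hf x) _) (hg x))]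
  exact rpow_sub_one_mul_le_rpow_add_rpow hp (hf x) (hg x)

lemma integrable_abs_sub_rpow : Integrable (fun x => |f x - g x| ^ p) μ := by
  have hcont : Continuous (fun t : ℝ => |t| ^ p) :=
    (continuous_rpow_const (by linarith)).comp continuous_abs
  refine (hfp.add hgp).mono' (hcont.comp_aestronglyMeasurable
    ((aestronglyMeasurable_of_integrable_rpow (by linarith) hf hfp).sub
    (aestronglyMeasurable_of_integrable_rpow (by linarith) hg hgp))) (ae_of_all _ fun x => ?_)
  rw [norm_of_nonneg (rpow_nonneg (abs_nonneg _) _)]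
  exact abs_sub_rpow_le_rpow_add_rpow (by linarith) (hf x) (hg x)

theorem integral_rpow_add_integral_rpow_sub_le_integral_abs_sub_rpow :
    (∫ x, f x ^ p ∂μ) + (∫ x, g x ^ p ∂μ) - p * (∫ x, f x ^ (p - 1) * g x ∂μ)
      - p * (∫ x, g x ^ (p - 1) * f x ∂μ) ≤ ∫ x, |f x - g x| ^ p ∂μ := by
  have hfg := (integrable_rpow_sub_one_mul hp hf hg hfp hgp).const_mul p
  have hgf := (integrable_rpow_sub_one_mul hp hg hf hgp hfp).const_mul p
  have hsum : Integrable (fun x => f x ^ p + g x ^ p) μ := hfp.add hgp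
  have hsum_sub : Integrable (fun x => f x ^ p + g x ^ p - p * (f x ^ (p - 1) * g x)) μ :=
    hsum.sub hfg
  calc _ = ∫ x, f x ^ p + g x ^ p - p * (f x ^ (p - 1) * g x) - p * (g x ^ (p - 1) * f x) ∂μ := by
        rw [integral_sub hsum_sub hgf, integral_sub hsum hfg, integral_add hfp hgp,
          integral_const_mul, integral_const_mul]
    _ ≤ ∫ x, |f x - g x| ^ p ∂μ :=
        integral_mono (hsum_sub.sub hgf) (integrable_abs_sub_rpow hp hf hg hfp hgp)
          fun x => rpow_add_rpow_sub_le_abs_sub_rpow hp (hf x) (hg x)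

end

theorem stmt7_general (N : ℕ) (p b C' : ℝ) (hp : 2 ≤ p)
    (w : EuclideanSpace ℝ (Fin N) → ℝ) (hw0 : ∀ x, 0 ≤ w x)
    (hwp : MeasureTheory.Integrable (fun x => w x ^ p))
    (hnorm : (∫ x, w x ^ p) = 1)
    (hcross : ∀ R > 0, ∀ y : EuclideanSpace ℝ (Fin N), ‖y‖ = 1 →
      (∫ x, w (x + R • y) ^ (p - 1) * w (x - R • y)) ≤ C' * Real.exp (-b * R)) :
    ∀ R > 0, ∀ y : EuclideanSpace ℝ (Fin N), ‖y‖ = 1 →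
      (∫ x, |w (x + R • y) - w (x - R • y)| ^ p) ≥ 2 - 2 * p * C' * Real.exp (-b * R) := by
  intro R hR y hy
  have hplus : ∫ x, w (x + R • y) ^ p = 1 :=
    (integral_add_right_eq_self (fun x => w x ^ p) _).trans hnorm
  have hminus : ∫ x, w (x - R • y) ^ p = 1 :=
    (integral_sub_right_eq_self (fun x => w x ^ p) _).trans hnorm
  have hcross_neg : ∫ x, w (x - R • y) ^ (p - 1) * w (x + R • y) ≤ C' * exp (-b * R) := by
    simpa only [smul_neg, ← sub_eq_add_neg, sub_neg_eq_add] using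
      hcross R hR (-y) (by rw [norm_neg, hy])
  have hlower := integral_rpow_add_integral_rpow_sub_le_integral_abs_sub_rpow (by linarith)
    (fun x => hw0 (x + R • y)) (fun x => hw0 (x - R • y))
    (hwp.comp_add_right (R • y)) (hwp.comp_sub_right (R • y))
  rw [hplus, hminus] at hlower
  have hp0 : 0 ≤ p := by linarith
  linarith [mul_le_mul_of_nonneg_left (hcross R hR y hy) hp0,
    mul_le_mul_of_nonneg_left hcross_neg hp0]

theorem stmt7 (N : ℕ) (hN : 1 ≤ N) (p b C' : ℝ) (hp : 2 ≤ p) (hb : 0 < b)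
    (w : EuclideanSpace ℝ (Fin N) → ℝ) (hw0 : ∀ x, 0 ≤ w x)
    (hwp : MeasureTheory.Integrable (fun x => w x ^ p))
    (hnorm : (∫ x, w x ^ p) = 1)
    (hcross : ∀ R > 0, ∀ y : EuclideanSpace ℝ (Fin N), ‖y‖ = 1 →
      (∫ x, w (x + R • y) ^ (p - 1) * w (x - R • y)) ≤ C' * Real.exp (-b * R)) :
    ∀ R > 0, ∀ y : EuclideanSpace ℝ (Fin N), ‖y‖ = 1 →
      (∫ x, |w (x + R • y) - w (x - R • y)| ^ p) ≥ 2 - 2 * p * C' * Real.exp (-b * R) :=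
  stmt7_general N p b C' hp w hw0 hwp hnorm hcross
end
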